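/- Every 2-moplex graph is AT-free, i.e., a graph with at most two moplexes contains no asteroidal triple. -/

import Mathlib

open SimpleGraph

namespace MoplexPaper

variable {V : Type*}

/-- Reachability in `G - S`: a walk from `u` to `v` all of whose vertices avoid `S`. -/
def ReachOutside (G : SimpleGraph V) (S : Set V) (u v : V) : Prop :=
  ∃ p : G.Walk u v, ∀ x ∈ p.support, x ∉ S

/-- `S` is a `u,v`-separator. -/
def IsSeparator (G : SimpleGraph V) (u v : V) (S : Set V) : Prop :=
  ¬ G.Adj u v ∧ u ∉ S ∧ v ∉ S ∧ ¬ ReachOutside G S u v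

/-- `S` is a minimal `u,v`-separator. -/
def IsMinSeparator (G : SimpleGraph V) (u v : V) (S : Set V) : Prop :=
  IsSeparator G u v S ∧ ∀ T ⊂ S, ¬ IsSeparator G u v T

/-- `S` is a minimal separator of `G`. -/
def IsMinimalSeparator (G : SimpleGraph V) (S : Set V) : Prop :=
  ∃ u v, u ≠ v ∧ IsMinSeparator G u v S

/-- The (open) neighbourhood of a set of vertices. -/
def setNbhd (G : SimpleGraph V) (X : Set V) : Set V :=
  {v | v ∉ X ∧ ∃ x ∈ X, G.Adj v x}

/-- The closed neighbourhood of a vertex. -/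
def closedNbhd (G : SimpleGraph V) (v : V) : Set V :=
  insert v (G.neighborSet v)

/-- `M` is a module of `G`. -/
def IsModule (G : SimpleGraph V) (M : Set V) : Prop :=
  ∀ v ∉ M, (∀ x ∈ M, G.Adj v x) ∨ (∀ x ∈ M, ¬ G.Adj v x)

/-- `M` is a clique module of `G`. -/
def IsCliqueModule (G : SimpleGraph V) (M : Set V) : Prop :=
  G.IsClique M ∧ IsModule G M

/-- `X` is a moplex of `G`: an inclusion-maximal clique module whose
neighbourhood is empty or a minimal separator. -/
def IsMoplex (G : SimpleGraph V) (X : Set V) : Prop :=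
  X.Nonempty ∧ IsCliqueModule G X ∧
  (∀ Y, X ⊆ Y → IsCliqueModule G Y → Y = X) ∧
  (setNbhd G X = ∅ ∨ IsMinimalSeparator G (setNbhd G X))

/-- A vertex is moplicial if it belongs to a moplex. -/
def Moplicial (G : SimpleGraph V) (v : V) : Prop := ∃ X, IsMoplex G X ∧ v ∈ X

/-- An extension of `v`: an induced `P₃` with midpoint `v`. -/
def IsExtension (G : SimpleGraph V) (v a b : V) : Prop :=
  a ≠ b ∧ G.Adj v a ∧ G.Adj v b ∧ ¬ G.Adj a b

/-- A cycle is induced if the only edges of `G` among its vertices are its own edges. -/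
def IsInducedCycle (G : SimpleGraph V) {w : V} (c : G.Walk w w) : Prop :=
  c.IsCycle ∧ ∀ x ∈ c.support, ∀ y ∈ c.support, G.Adj x y → s(x, y) ∈ c.edges

/-- `v` is avoidable: every extension of `v` is contained in an induced cycle. -/
def Avoidable (G : SimpleGraph V) (v : V) : Prop :=
  ∀ a b, IsExtension G v a b →
    ∃ (w : V) (c : G.Walk w w), IsInducedCycle G c ∧
      a ∈ c.support ∧ v ∈ c.support ∧ b ∈ c.support

/-- `A` is an asteroidal set of `G`. -/
def IsAsteroidal (G : SimpleGraph V) (A : Set V) : Prop :=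
  ∀ a ∈ A, ∀ x ∈ A, ∀ y ∈ A, x ≠ a → y ≠ a →
    ReachOutside G (closedNbhd G a) x y

/-- `G` is AT-free: it has no asteroidal triple. -/
def ATFree (G : SimpleGraph V) : Prop :=
  ¬ ∃ A : Set V, IsAsteroidal G A ∧ A.ncard = 3

/-- `G` has exactly the two moplexes `U` and `W`. -/
def HasExactlyTwoMoplexes (G : SimpleGraph V) (U W : Set V) : Prop :=
  IsMoplex G U ∧ IsMoplex G W ∧ U ≠ W ∧ ∀ X, IsMoplex G X → X = U ∨ X = W

/-- `G` is not complete. -/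
def NonComplete (G : SimpleGraph V) : Prop :=
  ∃ x y : V, x ≠ y ∧ ¬ G.Adj x y

/-!
For each vertex `u` of an asteroidal triple, let `K` be the component of `G - N[u]` containing the
other two vertices and `C` the component of `G - N(K)` containing `u`. Then `N(C) ⊆ N(K)`, so `C`
is a full side of the separator `N(C)`, with the connected set `K` seeing all of `N(C)` from the
other side.

Every such full side `C` contains a moplex. Either `C` is a clique joined to all of `N(C)`, and then
`C` itself is a moplex, or some vertex `v ∈ C ∪ N(C)` misses a vertex `c ∈ C`. Then the component
of `c` in `G - (N(C) ∪ N[v])` is a strictly smaller full side, whose opposite set is grown from `v`,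
and we recurse.

The sides of the three vertices are pairwise disjoint: the side of `a` avoids `N[b]`, hence lies in
the component of `G - N[b]` opposite the side of `b`. This yields three distinct moplexes.
-/

section ReachOutside

variable {G : SimpleGraph V} {B B' C : Set V} {u v w : V}

theorem ReachOutside.refl (hu : u ∉ B) : ReachOutside G B u u :=
  ⟨.nil, by simpa using hu⟩

theorem ReachOutside.of_adj (h : G.Adj u v) (hu : u ∉ B) (hv : v ∉ B) : ReachOutside G B u v :=
  ⟨.cons h .nil, by simp [hu, hv]⟩

theorem ReachOutside.refl_left : ReachOutside G B u v → ReachOutside G B u u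
  | ⟨p, hp⟩ => .refl (hp u p.start_mem_support)

theorem ReachOutside.symm (h : ReachOutside G B u v) : ReachOutside G B v u := by
  obtain ⟨p, hp⟩ := h
  exact ⟨p.reverse, fun x hx => hp x (by simpa using hx)⟩

theorem ReachOutside.trans (h₁ : ReachOutside G B u v) (h₂ : ReachOutside G B v w) :
    ReachOutside G B u w := by
  obtain ⟨p, hp⟩ := h₁
  obtain ⟨q, hq⟩ := h₂
  refine ⟨p.append q, fun x hx => ?_⟩
  rcases (SimpleGraph.Walk.mem_support_append_iff p q).mp hx with hx | hx
  exacts [hp x hx, hq x hx]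

theorem ReachOutside.mono (h : ReachOutside G B u v) (hB : B' ⊆ B) : ReachOutside G B' u v := by
  obtain ⟨p, hp⟩ := h
  exact ⟨p, fun x hx hxB => hp x hx (hB hxB)⟩

theorem ReachOutside.mem_of_setNbhd_subset (h : ReachOutside G B u v) (hu : u ∈ C)
    (hB : setNbhd G C ⊆ B) : v ∈ C := by
  obtain ⟨p, hp⟩ := h
  induction p with
  | nil => exact hu
  | cons hadj q ih =>
    refine ih (by_contra fun hC => ?_) fun x hx => hp x (List.mem_cons_of_mem _ hx)
    exact hp _ (List.mem_cons_of_mem _ q.start_mem_support) (hB ⟨hC, _, hu, hadj.symm⟩)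

end ReachOutside

/-- The vertex set of the component of `G - B` containing `u` (empty if `u ∈ B`). -/
def reachSet (G : SimpleGraph V) (B : Set V) (u : V) : Set V := {w | ReachOutside G B u w}

/-- `C` induces a connected subgraph of `G` (vacuously when `C` is empty). -/
def IsConnectedSet (G : SimpleGraph V) (C : Set V) : Prop :=
  ∀ x ∈ C, ∀ y ∈ C, ReachOutside G Cᶜ x y

section ReachSet

variable {G : SimpleGraph V} {B C K R : Set V} {u v w : V}

theorem disjoint_reachSet : Disjoint (reachSet G B u) B :=
  Set.disjoint_left.mpr fun _ ⟨p, hp⟩ => hp _ p.end_mem_support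

theorem reachSet_subset (hu : u ∈ C) (hB : setNbhd G C ⊆ B) : reachSet G B u ⊆ C :=
  fun _ hw => ReachOutside.mem_of_setNbhd_subset hw hu hB

theorem setNbhd_reachSet_subset : setNbhd G (reachSet G B u) ⊆ B :=
  fun _ ⟨hx, _, hy, hxy⟩ => by_contra fun hxB =>
    hx (ReachOutside.trans hy (.of_adj hxy.symm (disjoint_reachSet.notMem_of_mem_left hy) hxB))

theorem ReachOutside.within_reachSet (h : ReachOutside G B u v) :
    ReachOutside G (reachSet G B u)ᶜ u v := by
  classical
  obtain ⟨p, hp⟩ := h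
  exact ⟨p, fun x hx hx' =>
    hx' ⟨p.takeUntil x hx, fun y hy => hp y (p.support_takeUntil_subset_support hx hy)⟩⟩

theorem isConnectedSet_reachSet : IsConnectedSet G (reachSet G B u) := fun _ hx _ hy =>
  (ReachOutside.within_reachSet hx).symm.trans
    (ReachOutside.within_reachSet hy)

theorem isConnectedSet_singleton : IsConnectedSet G {v} := by
  rintro x rfl y rfl
  exact .refl (by simp)

theorem IsConnectedSet.insert_of_adj (hK : IsConnectedSet G K) (hk : w ∈ K) (hvw : G.Adj v w) :
    IsConnectedSet G (insert v K) := by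
  have hw : ∀ x ∈ insert v K, ReachOutside G (insert v K)ᶜ w x := by
    rintro x (rfl | hx)
    · exact .of_adj hvw.symm (by simp [hk]) (by simp)
    · exact (hK w hk x hx).mono (Set.compl_subset_compl.mpr (Set.subset_insert v K))
  exact fun x hx y hy => (hw x hx).symm.trans (hw y hy)

theorem IsConnectedSet.subset_reachSet (hR : IsConnectedSet G R) (hu : u ∈ R)
    (hRB : Disjoint R B) : R ⊆ reachSet G B u :=
  fun x hx => (hR u hu x hx).mono (Set.subset_compl_iff_disjoint_left.mpr hRB)

theorem union_setNbhd_subset (h : R ⊆ C) : R ∪ setNbhd G R ⊆ C ∪ setNbhd G C := by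
  rintro x (hx | ⟨hxR, y, hy, hxy⟩)
  · exact Or.inl (h hx)
  · by_cases hxC : x ∈ C
    exacts [Or.inl hxC, Or.inr ⟨hxC, y, h hy, hxy⟩]

theorem notMem_union_setNbhd (h : Disjoint R (closedNbhd G v)) : v ∉ R ∪ setNbhd G R := by
  rintro (hv | ⟨-, y, hy, hvy⟩)
  · exact h.notMem_of_mem_left hv (Set.mem_insert v _)
  · exact h.notMem_of_mem_left hy (Set.mem_insert_of_mem v hvy)

end ReachSet

/-- `C` is a full side of the separator `N(C)`, and `K` a connected set on the other side that
sees all of `N(C)`. -/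
structure FullSides (G : SimpleGraph V) (C K : Set V) : Prop where
  nonempty : C.Nonempty
  connected : IsConnectedSet G C
  connected_opp : IsConnectedSet G K
  disjoint : Disjoint K (C ∪ setNbhd G C)
  full : ∀ s ∈ setNbhd G C, ∃ k ∈ K, G.Adj s k

theorem exists_fullSides_ssubset_of_not_adj {G : SimpleGraph V} {C : Set V} {c₁ c₂ : V}
    (hc₁ : c₁ ∈ C) (hc₂ : c₂ ∈ C) (hne : c₁ ≠ c₂) (hc₁₂ : ¬ G.Adj c₁ c₂)
    (hS : setNbhd G C ⊆ G.neighborSet c₁) :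
    ∃ C' K', C' ⊂ C ∧ FullSides G C' K' := by
  have hC'C : reachSet G (closedNbhd G c₁) c₂ ⊆ C :=
    reachSet_subset hc₂ (hS.trans (Set.subset_insert c₁ _))
  have hc₁' : c₁ ∉ reachSet G (closedNbhd G c₁) c₂ ∪ setNbhd G (reachSet G (closedNbhd G c₁) c₂) :=
    notMem_union_setNbhd disjoint_reachSet
  refine ⟨reachSet G (closedNbhd G c₁) c₂, {c₁}, ?_, ⟨⟨c₂, .refl ?_⟩, isConnectedSet_reachSet,
    isConnectedSet_singleton, Set.disjoint_singleton_left.mpr hc₁', fun x hx => ?_⟩⟩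
  · exact Set.ssubset_iff_subset_ne.mpr ⟨hC'C, fun he => hc₁' (Or.inl (he ▸ hc₁))⟩
  · rintro (he | hadj)
    exacts [hne he.symm, hc₁₂ hadj]
  · rcases setNbhd_reachSet_subset hx with rfl | hadj
    exacts [absurd (Or.inr hx) hc₁', ⟨c₁, rfl, hadj.symm⟩]

namespace FullSides

variable {G : SimpleGraph V} {C K : Set V}

theorem not_adj (h : FullSides G C K) {k c : V} (hk : k ∈ K) (hc : c ∈ C) : ¬ G.Adj k c := by
  intro hkc
  refine h.disjoint.notMem_of_mem_left hk ?_
  by_cases hkC : k ∈ C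
  exacts [Or.inl hkC, Or.inr ⟨hkC, c, hc, hkc⟩]

theorem isMinimalSeparator (h : FullSides G C K) (hS : (setNbhd G C).Nonempty) :
    IsMinimalSeparator G (setNbhd G C) := by
  obtain ⟨s₀, hs₀⟩ := hS
  obtain ⟨k₀, hk₀, -⟩ := h.full s₀ hs₀
  obtain ⟨c₀, hc₀⟩ := h.nonempty
  have hk₀C := h.disjoint.notMem_of_mem_left hk₀
  refine ⟨c₀, k₀, fun he => hk₀C (Or.inl (he ▸ hc₀)),
    ⟨fun hadj => h.not_adj hk₀ hc₀ hadj.symm, fun hc => hc.1 hc₀, fun hk => hk₀C (Or.inr hk),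
      fun hr => hk₀C (Or.inl (hr.mem_of_setNbhd_subset hc₀ subset_rfl))⟩, ?_⟩
  intro T hT hsep
  obtain ⟨s, hsS, hsT⟩ := Set.exists_of_ssubset hT
  obtain ⟨k, hk, hsk⟩ := h.full s hsS
  obtain ⟨c, hc, hsc⟩ := hsS.2
  have hTC : T ⊆ Cᶜ := fun _ hx hxC => (hT.subset hx).1 hxC
  have hTK : T ⊆ Kᶜ := fun _ hx hxK => h.disjoint.notMem_of_mem_left hxK (Or.inr (hT.subset hx))
  -- the walk `c₀ ⇝ c - s - k ⇝ k₀` runs through `C`, `s` and `K`, so it avoids `T`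
  have hcs : ReachOutside G T c s := .of_adj hsc.symm (fun hcT => hTC hcT hc) hsT
  have hsk' : ReachOutside G T s k := .of_adj hsk hsT (fun hkT => hTK hkT hk)
  exact hsep.2.2.2 ((((h.connected c₀ hc₀ c hc).mono hTC).trans hcs).trans
    (hsk'.trans ((h.connected_opp k hk k₀ hk₀).mono hTK)))

/-- Maximality: a larger clique module would contain a vertex of `N(C)`, whose neighbour in `K`
sees only part of it. -/
theorem isMoplex (h : FullSides G C K) (hC : G.IsClique C)
    (hSC : ∀ s ∈ setNbhd G C, ∀ c ∈ C, G.Adj s c) : IsMoplex G C := by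
  obtain ⟨c₀, hc₀⟩ := h.nonempty
  refine ⟨h.nonempty, ⟨hC, fun v hv => ?_⟩, fun Y hCY hY => ?_, ?_⟩
  · by_cases hvS : v ∈ setNbhd G C
    exacts [Or.inl (hSC v hvS), Or.inr fun x hx hvx => hvS ⟨hv, x, hx, hvx⟩]
  · refine (Set.Subset.antisymm (fun y hy => by_contra fun hyC => ?_) hCY)
    have hyS : y ∈ setNbhd G C :=
      ⟨hyC, c₀, hc₀, hY.1 hy (hCY hc₀) fun he => hyC (he ▸ hc₀)⟩
    obtain ⟨k, hk, hyk⟩ := h.full y hyS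
    have hkY : k ∉ Y := fun hkY => h.not_adj hk hc₀
      (hY.1 hkY (hCY hc₀) fun he => h.disjoint.notMem_of_mem_left hk (Or.inl (he ▸ hc₀)))
    rcases hY.2 k hkY with hall | hnone
    exacts [h.not_adj hk hc₀ (hall c₀ (hCY hc₀)), hnone y hy hyk.symm]
  · rcases (setNbhd G C).eq_empty_or_nonempty with hS | hS
    exacts [Or.inl hS, Or.inr (h.isMinimalSeparator hS)]

theorem exists_ssubset_of_not_adj_neighbour (h : FullSides G C K) {s c : V}
    (hs : s ∈ setNbhd G C) (hc : c ∈ C) (hsc : ¬ G.Adj s c) :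
    ∃ C' K', C' ⊂ C ∧ FullSides G C' K' := by
  set B := setNbhd G C ∪ closedNbhd G s
  have hC'C : reachSet G B c ⊆ C := reachSet_subset hc Set.subset_union_left
  have hs' : s ∉ reachSet G B c ∪ setNbhd G (reachSet G B c) :=
    notMem_union_setNbhd (disjoint_reachSet.mono_right Set.subset_union_right)
  obtain ⟨k, hk, hsk⟩ := h.full s hs
  obtain ⟨c', hc', hsc'⟩ := hs.2
  have hdisj : Disjoint (insert s K) (reachSet G B c ∪ setNbhd G (reachSet G B c)) :=
    Set.disjoint_insert_left.mpr ⟨hs', h.disjoint.mono_right (union_setNbhd_subset hC'C)⟩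
  refine ⟨reachSet G B c, insert s K, ?_, ⟨⟨c, .refl ?_⟩, isConnectedSet_reachSet,
    h.connected_opp.insert_of_adj hk hsk, hdisj, fun x hx => ?_⟩⟩
  · refine Set.ssubset_iff_subset_ne.mpr ⟨hC'C, fun he => ?_⟩
    exact disjoint_reachSet.notMem_of_mem_left (he ▸ hc')
      (Set.mem_union_right _ (Set.mem_insert_of_mem s hsc'))
  · rintro (hcS | rfl | hadj)
    exacts [hcS.1 hc, hs.1 hc, hsc hadj]
  · rcases setNbhd_reachSet_subset hx with hxS | rfl | hsx
    · obtain ⟨k', hk', hxk'⟩ := h.full x hxS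
      exact ⟨k', Set.mem_insert_of_mem s hk', hxk'⟩
    · exact absurd (Or.inr hx) hs'
    · exact ⟨s, Set.mem_insert s K, hsx.symm⟩

theorem exists_ssubset (h : FullSides G C K)
    (hC : ¬ (G.IsClique C ∧ ∀ s ∈ setNbhd G C, ∀ c ∈ C, G.Adj s c)) :
    ∃ C' K', C' ⊂ C ∧ FullSides G C' K' := by
  by_cases hSC : ∀ s ∈ setNbhd G C, ∀ c ∈ C, G.Adj s c
  · have hnc : ¬ G.IsClique C := fun hcl => hC ⟨hcl, hSC⟩
    simp only [SimpleGraph.isClique_iff, Set.Pairwise, not_forall] at hnc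
    obtain ⟨c₁, hc₁, c₂, hc₂, hne, hc₁₂⟩ := hnc
    exact exists_fullSides_ssubset_of_not_adj hc₁ hc₂ hne hc₁₂ fun s hs => (hSC s hs c₁ hc₁).symm
  · push Not at hSC
    obtain ⟨s, hs, c, hc, hsc⟩ := hSC
    exact h.exists_ssubset_of_not_adj_neighbour hs hc hsc

theorem exists_moplex [Finite V] (h : FullSides G C K) : ∃ X ⊆ C, IsMoplex G X := by
  induction hn : C.ncard using Nat.strong_induction_on generalizing C K with
  | _ n ih =>
    by_cases hC : G.IsClique C ∧ ∀ s ∈ setNbhd G C, ∀ c ∈ C, G.Adj s c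
    · exact ⟨C, subset_rfl, h.isMoplex hC.1 hC.2⟩
    obtain ⟨C', K', hC'C, h'⟩ := h.exists_ssubset hC
    obtain ⟨X, hXC', hX⟩ := ih _ (hn ▸ Set.ncard_lt_ncard hC'C) h' rfl
    exact ⟨X, hXC'.trans hC'C.subset, hX⟩

end FullSides

/-- For a vertex `u` of an asteroidal triple and another vertex `w` of it, `farSide G u w` is the
component of `G - N[u]` holding the other two vertices, and `nearSide G u w` is the full side of
`u` opposite to it. -/
def farSide (G : SimpleGraph V) (u w : V) : Set V := reachSet G (closedNbhd G u) w

def nearSide (G : SimpleGraph V) (u w : V) : Set V := reachSet G (setNbhd G (farSide G u w)) u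

section Sides

variable {G : SimpleGraph V} {u v w w' : V}

theorem self_mem_nearSide : u ∈ nearSide G u w :=
  .refl fun h => notMem_union_setNbhd disjoint_reachSet (Or.inr h)

theorem fullSides_nearSide_farSide : FullSides G (nearSide G u w) (farSide G u w) := by
  refine ⟨⟨u, self_mem_nearSide⟩, isConnectedSet_reachSet, isConnectedSet_reachSet,
    Set.disjoint_union_right.mpr ⟨Set.disjoint_left.mpr fun z hz hz' => ?_,
      (Set.disjoint_right.mpr fun _ hx => hx.1).mono_right setNbhd_reachSet_subset⟩, fun s hs => ?_⟩
  · exact notMem_union_setNbhd disjoint_reachSet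
      (Or.inl ((ReachOutside.symm hz').mem_of_setNbhd_subset hz subset_rfl))
  · obtain ⟨-, k, hk, hsk⟩ := setNbhd_reachSet_subset hs
    exact ⟨k, hk, hsk⟩

theorem nearSide_subset_farSide (hv : v ∈ farSide G u w) (hu : u ∈ farSide G v w') :
    nearSide G u w ⊆ farSide G v w' := by
  have hvN : Disjoint (nearSide G u w) (closedNbhd G v) := by
    refine Set.disjoint_right.mpr fun y hy hyN => ?_
    refine fullSides_nearSide_farSide.disjoint.notMem_of_mem_left hv ?_
    by_cases hvN : v ∈ nearSide G u w
    · exact Or.inl hvN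
    · rcases hy with rfl | hvy
      exacts [absurd hyN hvN, Or.inr ⟨hvN, y, hyN, hvy⟩]
  exact fun x hx => ReachOutside.trans hu
    (isConnectedSet_reachSet.subset_reachSet self_mem_nearSide hvN hx)

theorem disjoint_nearSide (hv : v ∈ farSide G u w) (hu : u ∈ farSide G v w') :
    Disjoint (nearSide G u w) (nearSide G v w') :=
  (fullSides_nearSide_farSide.disjoint.mono_right Set.subset_union_left).mono_left
    (nearSide_subset_farSide hv hu)

end Sides

/-- Every graph with at most two moplexes is AT-free. -/
theorem twoMoplex_ATFree {V : Type*} [Fintype V] (G : SimpleGraph V)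
    (h : {X : Set V | IsMoplex G X}.ncard ≤ 2) : ATFree G := by
  rintro ⟨A, hA, hA3⟩
  obtain ⟨a, b, c, hab, hac, hbc, rfl⟩ := Set.ncard_eq_three.mp hA3
  have hbc_a : ReachOutside G (closedNbhd G a) b c :=
    hA a (by simp) b (by simp) c (by simp) hab.symm hac.symm
  have hac_b : ReachOutside G (closedNbhd G b) a c :=
    hA b (by simp) a (by simp) c (by simp) hab hbc.symm
  have hab_c : ReachOutside G (closedNbhd G c) a b :=
    hA c (by simp) a (by simp) b (by simp) hac hbc
  obtain ⟨Xa, hXa, hMa⟩ := (fullSides_nearSide_farSide (u := a) (w := b)).exists_moplex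
  obtain ⟨Xb, hXb, hMb⟩ := (fullSides_nearSide_farSide (u := b) (w := a)).exists_moplex
  obtain ⟨Xc, hXc, hMc⟩ := (fullSides_nearSide_farSide (u := c) (w := a)).exists_moplex
  have hne : ∀ {X Y P Q : Set V}, IsMoplex G X → X ⊆ P → Y ⊆ Q → Disjoint P Q → X ≠ Y :=
    fun hX hXP hYQ hPQ he => hX.1.ne_empty (disjoint_self.mp (hPQ.mono hXP (he ▸ hYQ)))
  have h3 : ({Xa, Xb, Xc} : Set (Set V)).ncard = 3 := Set.ncard_eq_three.mpr ⟨Xa, Xb, Xc,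
    hne hMa hXa hXb (disjoint_nearSide hbc_a.refl_left hac_b.refl_left),
    hne hMa hXa hXc (disjoint_nearSide hbc_a hab_c.refl_left),
    hne hMb hXb hXc (disjoint_nearSide hac_b hab_c), rfl⟩
  have hsub : ({Xa, Xb, Xc} : Set (Set V)) ⊆ {X | IsMoplex G X} := by
    simp only [Set.insert_subset_iff, Set.singleton_subset_iff]
    exact ⟨hMa, hMb, hMc⟩
  have := Set.ncard_le_ncard hsub (Set.toFinite _)
  omega
end MoplexPaper
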